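/- Let J ⊆ ℝ be an open interval and φ : J → ℝ be continuously differentiable. If u : I → J is a C² solution of the grim-reaper equation u''(x) = φ'(u(x))·(1 + u'(x)²) on an interval I ⊆ ℝ, then the function x ↦ e^{φ(u(x))} / √(1 + u'(x)²) is constant on I. In particular, if 0 ∈ I, u(0) = u₀ and u'(0) = 0, then u'(x)² = e^{2(φ(u(x)) − φ(u₀))} − 1 for every x ∈ I. -/

import Mathlib

/-!
The grim-reaper equation has the first integral `φ(u) - ½ log(1 + u'²)`: differentiating it gives
`φ'(u) u' - u' u'' / (1 + u'²)`, which vanishes because `u'' = φ'(u)(1 + u'²)`. Exponentiating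
yields the constant `e^{φ(u)} / √(1 + u'²)`, and with `u'(0) = 0` its value is `e^{φ(u₀)}`.
-/

open Real

theorem Convex.eq_of_forall_hasDerivWithinAt_zero {E : Type*} [NormedAddCommGroup E]
    [NormedSpace ℝ E] {s : Set ℝ} {f : ℝ → E} (hs : Convex ℝ s)
    (hf : ∀ x ∈ s, HasDerivWithinAt f 0 s x) {x y : ℝ} (hx : x ∈ s) (hy : y ∈ s) :
    f x = f y := by
  have h := hs.norm_image_sub_le_of_norm_hasDerivWithin_le (C := 0) hf (fun _ _ ↦ by simp) hy hx
  rwa [zero_mul, norm_le_zero_iff, sub_eq_zero] at h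

noncomputable def grimReaperIntegral (φ u u' : ℝ → ℝ) (x : ℝ) : ℝ :=
  φ (u x) - log (1 + u' x ^ 2) / 2

section GrimReaper

variable {φ φ' u u' : ℝ → ℝ} {x : ℝ}

lemma exp_grimReaperIntegral :
    exp (grimReaperIntegral φ u u' x) = exp (φ (u x)) / √(1 + u' x ^ 2) := by
  have hpos : 0 < √(1 + u' x ^ 2) := sqrt_pos.2 (by positivity)
  rw [grimReaperIntegral, exp_sub, ← log_sqrt (by positivity), exp_log hpos]

lemma hasDerivAt_grimReaperIntegral (hφ : HasDerivAt φ (φ' (u x)) (u x))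
    (hu : HasDerivAt u (u' x) x) (hu' : HasDerivAt u' (φ' (u x) * (1 + u' x ^ 2)) x) :
    HasDerivAt (grimReaperIntegral φ u u') 0 x := by
  have hpos : 1 + u' x ^ 2 ≠ 0 := by positivity
  have h : HasDerivAt (fun y ↦ φ (u y) - log (1 + u' y ^ 2) / 2)
      (φ' (u x) * u' x - 2 * u' x ^ (2 - 1) * (φ' (u x) * (1 + u' x ^ 2)) / (1 + u' x ^ 2) / 2) x :=
    (hφ.comp x hu).sub ((((hu'.fun_pow 2).const_add 1).log hpos).div_const 2)
  refine h.congr_deriv ?_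
  field_simp
  ring

end GrimReaper

theorem stmt_0 (J I : Set ℝ) (hIconv : Convex ℝ I)
    (φ φ' : ℝ → ℝ)
    (hφ : ∀ t ∈ J, HasDerivAt φ (φ' t) t)
    (u u' : ℝ → ℝ)
    (hmaps : ∀ x ∈ I, u x ∈ J)
    (hu : ∀ x ∈ I, HasDerivAt u (u' x) x)
    (hu' : ∀ x ∈ I, HasDerivAt u' (φ' (u x) * (1 + u' x ^ 2)) x) :
    (∀ x ∈ I, ∀ y ∈ I,
      Real.exp (φ (u x)) / Real.sqrt (1 + u' x ^ 2)
        = Real.exp (φ (u y)) / Real.sqrt (1 + u' y ^ 2)) ∧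
    (∀ u₀ : ℝ, (0 : ℝ) ∈ I → u 0 = u₀ → u' 0 = 0 →
      ∀ x ∈ I, u' x ^ 2 = Real.exp (2 * (φ (u x) - φ u₀)) - 1) := by
  have hconst : ∀ x ∈ I, ∀ y ∈ I, grimReaperIntegral φ u u' x = grimReaperIntegral φ u u' y :=
    fun x hx y hy ↦ hIconv.eq_of_forall_hasDerivWithinAt_zero (fun z hz ↦
      (hasDerivAt_grimReaperIntegral (hφ _ (hmaps z hz)) (hu z hz) (hu' z hz)).hasDerivWithinAt)
      hx hy
  refine ⟨fun x hx y hy ↦ ?_, fun u₀ h0 hu0 hu'0 x hx ↦ ?_⟩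
  · rw [← exp_grimReaperIntegral, ← exp_grimReaperIntegral, hconst x hx y hy]
  · have h := hconst x hx 0 h0
    simp only [grimReaperIntegral, hu0, hu'0] at h
    have hlog : log (1 + u' x ^ 2) = 2 * (φ (u x) - φ u₀) := by norm_num at h; linarith
    rw [← hlog, exp_log (by positivity)]
    ring
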